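/- Let D be a regular category and C a full subcategory of D closed in D under finite limits and under quotients. If D is a Goursat category, then C is a Goursat category. -/

import Mathlib

/-! Basic notions: regular categories, internal relations, relational composition,
equivalence relations, Goursat categories. -/

open CategoryTheory CategoryTheory.Limits

universe v u v₂ u₂

namespace Goursat

/-- `f` is a regular epimorphism (Prop-valued version of `RegularEpi`). -/
def IsRegEpi {C : Type u} [Category.{v} C] {X Y : C} (f : X ⟶ Y) : Prop :=
  Nonempty (RegularEpi f)

/-- A (regular) *regular category*: finitely complete (assumed via `HasFiniteLimits`),
kernel pairs have coequalisers, and regular epimorphisms are stable under pullback. -/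
class IsRegular (C : Type u) [Category.{v} C] [HasFiniteLimits C] : Prop where
  /-- kernel pairs have coequalisers -/
  hasCoeqOfKernelPair :
    ∀ {X Y : C} (f : X ⟶ Y), HasCoequalizer (pullback.fst f f) (pullback.snd f f)
  /-- regular epimorphisms are stable under pullback -/
  regEpiStable :
    ∀ {P X Y Z : C} (p₁ : P ⟶ X) (p₂ : P ⟶ Y) (f : X ⟶ Z) (g : Y ⟶ Z),
      IsPullback p₁ p₂ f g → IsRegEpi g → IsRegEpi p₁

section Relations

variable {C : Type u} [Category.{v} C] [HasFiniteLimits C]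

/-- An internal relation from `X` to `Y`: a subobject of `X × Y`. -/
structure Rel (C : Type u) [Category.{v} C] [HasFiniteLimits C] (X Y : C) :
    Type (max u v) where
  obj : C
  p : obj ⟶ X
  q : obj ⟶ Y
  mono : Mono (prod.lift p q)

/-- The opposite relation. -/
def Rel.op {X Y : C} (R : Rel C X Y) : Rel C Y X where
  obj := R.obj
  p := R.q
  q := R.p
  mono := by
    haveI := R.mono
    have h : prod.lift R.q R.p = prod.lift R.p R.q ≫ (prod.braiding X Y).hom := by
      apply Limits.prod.hom_ext <;> simp <;> (repeat erw [prod.lift_fst]) <;> (repeat erw [prod.lift_snd])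
    rw [h]
    exact mono_comp _ _

/-- A morphism `f : X ⟶ Y` seen as the relation `⟨1_X, f⟩ : X ↣ X × Y`. -/
def Rel.ofHom {X Y : C} (f : X ⟶ Y) : Rel C X Y where
  obj := X
  p := 𝟙 X
  q := f
  mono := by
    haveI : Mono (prod.lift (𝟙 X) f ≫ prod.fst) := by
      rw [prod.lift_fst]; infer_instance
    exact mono_of_mono _ prod.fst

/-- Equality of relations (as subobjects). -/
def Rel.equiv {X Y : C} (T U : Rel C X Y) : Prop :=
  ∃ i : T.obj ≅ U.obj, i.hom ≫ U.p = T.p ∧ i.hom ≫ U.q = T.q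

/-- The subobject order on relations. -/
def Rel.le {X Y : C} (T U : Rel C X Y) : Prop :=
  ∃ m : T.obj ⟶ U.obj, m ≫ U.p = T.p ∧ m ≫ U.q = T.q

/-- `T` is the relational composite `S ∘ R` (first `R`, then `S`); it is the
(regular epi, mono) image of `(r₁ ∘ pr₁, s₂ ∘ pr₂) : R ×_Y S ⟶ X × Z`. -/
def IsComp {X Y Z : C} (R : Rel C X Y) (S : Rel C Y Z) (T : Rel C X Z) : Prop :=
  ∃ e : pullback R.q S.p ⟶ T.obj,
    IsRegEpi e ∧ e ≫ T.p = pullback.fst R.q S.p ≫ R.p ∧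
      e ≫ T.q = pullback.snd R.q S.p ≫ S.q

/-- An internal equivalence relation on `X` (with chosen - necessarily unique -
reflexivity, symmetry and transitivity witnesses). -/
structure EqRel (C : Type u) [Category.{v} C] [HasFiniteLimits C] (X : C)
    extends Rel C X X where
  erefl : X ⟶ obj
  erefl_p : erefl ≫ p = 𝟙 X
  erefl_q : erefl ≫ q = 𝟙 X
  esymm : obj ⟶ obj
  esymm_p : esymm ≫ p = q
  esymm_q : esymm ≫ q = p
  etrans : pullback q p ⟶ obj
  etrans_p : etrans ≫ p = pullback.fst q p ≫ p
  etrans_q : etrans ≫ q = pullback.snd q p ≫ q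

/-- The kernel pair of `f`, as a relation on `X`. -/
noncomputable def kernelPairRel {X Y : C} (f : X ⟶ Y) : Rel C X X where
  obj := pullback f f
  p := pullback.fst f f
  q := pullback.snd f f
  mono := ⟨fun {Z} u v h => by
    apply pullback.hom_ext
    · have h1 := h =≫ prod.fst
      simp only [Category.assoc] at h1
      erw [prod.lift_fst] at h1
      exact h1
    · have h1 := h =≫ prod.snd
      simp only [Category.assoc] at h1
      erw [prod.lift_snd] at h1
      exact h1⟩

/-- A monomorphism `i : I ↣ Y`, seen as the relation `(i, i)` on `Y`. -/
def monoPairRel {I Y : C} (i : I ⟶ Y) (hi : Mono i) : Rel C Y Y where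
  obj := I
  p := i
  q := i
  mono := by
    haveI : Mono (prod.lift i i ≫ prod.fst) := by rw [prod.lift_fst]; exact hi
    exact mono_of_mono _ prod.fst

/-- The regular image `f(R)` of a relation `R` on `X` along a regular epimorphism
`f : X ↠ Y`: `R'` is the image of `(f × f) ∘ ⟨r₁, r₂⟩`. -/
def IsRegularImage {X Y : C} (f : X ⟶ Y) (R : Rel C X X) (R' : Rel C Y Y) : Prop :=
  ∃ ψ : R.obj ⟶ R'.obj, IsRegEpi ψ ∧ ψ ≫ R'.p = R.p ≫ f ∧ ψ ≫ R'.q = R.q ≫ f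

end Relations

/-- A *Goursat category*: a regular category in which `RSR = SRS` for all pairs of
equivalence relations `R`, `S` on the same object. -/
class IsGoursat (C : Type u) [Category.{v} C] [HasFiniteLimits C]
    extends IsRegular C : Prop where
  goursat :
    ∀ {X : C} (R S : EqRel C X) (SR RSR RS SRS : Rel C X X),
      IsComp R.toRel S.toRel SR → IsComp SR R.toRel RSR →
      IsComp S.toRel R.toRel RS → IsComp RS S.toRel SRS →
      RSR.equiv SRS

/-- `D` is a regular category (packaged as a mere property). -/
def RegularCat (D : Type u₂) [Category.{v₂} D] : Prop :=
  ∃ h : HasFiniteLimits D, @IsRegular D _ h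

/-- `D` is a Goursat category (packaged as a mere property). -/
def GoursatCat (D : Type u₂) [Category.{v₂} D] : Prop :=
  ∃ h : HasFiniteLimits D, @IsGoursat D _ h

end Goursat

/-! The inclusion `ι : C ⥤ D` is fully faithful and, `C` being closed under finite limits,
preserves them. Closure under quotients puts the `D`-coequaliser of a kernel pair of `C` back
into `C`, so `ι` preserves and reflects regular epimorphisms; hence `C` is regular and `ι` carries
equivalence relations and relational composites of `C` to those of `D`. The isomorphism
`RSR ≅ SRS` in `D` then comes from `C` by fullness. -/

namespace Goursat

lemma isRegEpi_iff_isRegularEpi {C : Type u} [Category.{v} C] {X Y : C} (f : X ⟶ Y) :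
    IsRegEpi f ↔ IsRegularEpi f :=
  ⟨fun h => ⟨h⟩, fun h => h.regularEpi⟩

lemma IsRegular.hasCoequalizer_of_isKernelPair {C : Type u} [Category.{v} C] [HasFiniteLimits C]
    [IsRegular C] {X Y Z : C} {f : X ⟶ Y} {a b : Z ⟶ X} (h : IsKernelPair f a b) :
    HasCoequalizer a b :=
  have := IsRegular.hasCoeqOfKernelPair f
  hasColimit_of_iso (parallelPair.ext (F := parallelPair a b)
    (G := parallelPair (pullback.fst f f) (pullback.snd f f)) h.isoPullback (Iso.refl _))

section Transfer

variable {C : Type u} [Category.{v} C] [HasFiniteLimits C]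
  {D : Type u₂} [Category.{v₂} D] [HasFiniteLimits D] (F : C ⥤ D) [PreservesFiniteLimits F]

def Rel.map {X Y : C} (R : Rel C X Y) : Rel D (F.obj X) (F.obj Y) where
  obj := F.obj R.obj
  p := F.map R.p
  q := F.map R.q
  mono := by
    have := R.mono
    have h : F.map (prod.lift R.p R.q) ≫ prodComparison F X Y =
        prod.lift (F.map R.p) (F.map R.q) := by
      ext <;> simp only [Category.assoc, prodComparison_fst, prodComparison_snd, ← F.map_comp,
        prod.lift_fst, prod.lift_snd]
    rw [← h]
    infer_instance

noncomputable def EqRel.map {X : C} (R : EqRel C X) : EqRel D (F.obj X) where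
  toRel := R.toRel.map F
  erefl := F.map R.erefl
  erefl_p := by simp only [Rel.map, ← F.map_comp, R.erefl_p, F.map_id]
  erefl_q := by simp only [Rel.map, ← F.map_comp, R.erefl_q, F.map_id]
  esymm := F.map R.esymm
  esymm_p := by simp only [Rel.map, ← F.map_comp, R.esymm_p]
  esymm_q := by simp only [Rel.map, ← F.map_comp, R.esymm_q]
  etrans := (PreservesPullback.iso F R.q R.p).inv ≫ F.map R.etrans
  etrans_p := by
    dsimp only [Rel.map]
    rw [Category.assoc, ← F.map_comp, R.etrans_p, F.map_comp, PreservesPullback.iso_inv_fst_assoc]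
  etrans_q := by
    dsimp only [Rel.map]
    rw [Category.assoc, ← F.map_comp, R.etrans_q, F.map_comp, PreservesPullback.iso_inv_snd_assoc]

lemma IsComp.map (hF : ∀ ⦃A B : C⦄ (f : A ⟶ B), IsRegEpi f → IsRegEpi (F.map f))
    {X Y Z : C} {R : Rel C X Y} {S : Rel C Y Z} {T : Rel C X Z} (h : IsComp R S T) :
    IsComp (R.map F) (S.map F) (T.map F) := by
  obtain ⟨e, he, hp, hq⟩ := h
  refine ⟨(PreservesPullback.iso F R.q S.p).inv ≫ F.map e, ?_, ?_, ?_⟩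
  · rw [isRegEpi_iff_isRegularEpi]
    exact MorphismProperty.RespectsIso.precomp (.regularEpi D)
      (PreservesPullback.iso F R.q S.p).inv _ ((isRegEpi_iff_isRegularEpi _).1 (hF e he))
  · dsimp only [Rel.map]
    rw [Category.assoc, ← F.map_comp, hp, F.map_comp, PreservesPullback.iso_inv_fst_assoc]
  · dsimp only [Rel.map]
    rw [Category.assoc, ← F.map_comp, hq, F.map_comp, PreservesPullback.iso_inv_snd_assoc]

lemma Rel.equiv_of_map [F.Full] [F.Faithful] {X Y : C} {T U : Rel C X Y}
    (h : (T.map F).equiv (U.map F)) : T.equiv U := by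
  obtain ⟨i, hp, hq⟩ : ∃ i : F.obj T.obj ≅ F.obj U.obj,
      i.hom ≫ F.map U.p = F.map T.p ∧ i.hom ≫ F.map U.q = F.map T.q := h
  exact ⟨F.preimageIso i, F.map_injective (by simpa using hp),
    F.map_injective (by simpa using hq)⟩

theorem IsGoursat.of_fullyFaithful [IsRegular C] [IsGoursat D] [F.Full] [F.Faithful]
    (hF : ∀ ⦃A B : C⦄ (f : A ⟶ B), IsRegEpi f → IsRegEpi (F.map f)) : IsGoursat C where
  goursat R S SR RSR RS SRS hSR hRSR hRS hSRS :=
    Rel.equiv_of_map F <| IsGoursat.goursat (R.map F) (S.map F) (SR.map F) (RSR.map F)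
      (RS.map F) (SRS.map F) (hSR.map F hF) (hRSR.map F hF) (hRS.map F hF) (hSRS.map F hF)

end Transfer

lemma isRegEpi_of_isRegEpi_map {C : Type u} [Category.{v} C] [HasPullbacks C]
    {D : Type u₂} [Category.{v₂} D] (F : C ⥤ D) [F.Full] [F.Faithful]
    [PreservesLimitsOfShape WalkingCospan F] {X Y : C} {f : X ⟶ Y} (h : IsRegEpi (F.map f)) :
    IsRegEpi f := by
  obtain ⟨r⟩ := h
  exact ⟨regularEpiOfKernelPair f (isColimitOfIsColimitCoforkMap F _
    (IsKernelPair.toCoequalizer (IsPullback.map F (IsKernelPair.of_hasPullback f)) r))⟩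

section FullSubcategory

variable {D : Type u} [Category.{v} D]

def IsClosedUnderQuotients (P : ObjectProperty D) : Prop :=
  ∀ {A B : D} (f : A ⟶ B), IsRegEpi f → P A → P B

variable {P : ObjectProperty D}

lemma IsClosedUnderQuotients.isClosedUnderColimitsOfShape_walkingParallelPair
    (hP : IsClosedUnderQuotients P) : P.IsClosedUnderColimitsOfShape WalkingParallelPair where
  colimitsOfShape_le := by
    rintro X ⟨h⟩
    exact hP _ ⟨Cofork.IsColimit.regularEpi
      ((IsColimit.precomposeInvEquiv (diagramIsoParallelPair h.diag) _).symm h.isColimit)⟩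
      (h.prop_diag_obj .one)

variable [HasFiniteLimits D] [P.IsClosedUnderLimitsOfShape WalkingCospan]

lemma hasColimit_kernelPair_comp_ι [IsRegular D] {X Y : P.FullSubcategory} (f : X ⟶ Y) :
    HasColimit (parallelPair (pullback.fst f f) (pullback.snd f f) ⋙ P.ι) :=
  have := IsRegular.hasCoequalizer_of_isKernelPair
    (IsPullback.map P.ι (IsKernelPair.of_hasPullback f))
  hasColimit_of_iso (F := parallelPair (P.ι.map (pullback.fst f f)) (P.ι.map (pullback.snd f f)))
    (diagramIsoParallelPair _)

variable [IsRegular D] (hP : IsClosedUnderQuotients P)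
include hP

lemma isRegEpi_ι_map_iff {X Y : P.FullSubcategory} (f : X ⟶ Y) :
    IsRegEpi (P.ι.map f) ↔ IsRegEpi f := by
  refine ⟨isRegEpi_of_isRegEpi_map P.ι, fun ⟨r⟩ => ?_⟩
  have := hP.isClosedUnderColimitsOfShape_walkingParallelPair
  have := hasColimit_kernelPair_comp_ι f
  have := createsColimitFullSubcategoryInclusionOfClosed WalkingParallelPair P
    (parallelPair (pullback.fst f f) (pullback.snd f f))
  exact ⟨Cofork.IsColimit.regularEpi (isColimitCoforkMapOfIsColimit P.ι _
    (IsKernelPair.toCoequalizer (IsKernelPair.of_hasPullback f) r))⟩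

lemma isRegular_fullSubcategory [HasFiniteLimits P.FullSubcategory] :
    IsRegular P.FullSubcategory where
  hasCoeqOfKernelPair f :=
    have := hP.isClosedUnderColimitsOfShape_walkingParallelPair
    have := hasColimit_kernelPair_comp_ι f
    hasColimit_of_closedUnderColimits WalkingParallelPair P _
  regEpiStable _ _ _ g hpb hg :=
    (isRegEpi_ι_map_iff hP _).1 <|
      IsRegular.regEpiStable _ _ _ _ (hpb.map P.ι) ((isRegEpi_ι_map_iff hP g).2 hg)

end FullSubcategory

/-- Let `D` be a regular category and `C` a full subcategory of
`D` closed under finite limits and under quotients. If `D` is a Goursat category,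
then so is `C`. -/
theorem fullSubcategory_goursat
    (D : Type u) [Category.{v} D] [HasFiniteLimits D] [IsGoursat D]
    (P : D → Prop)
    (hlim : ∀ (J : Type) [SmallCategory J] [FinCategory J] (F : J ⥤ D),
      (∀ j, P (F.obj j)) → ∀ c : Cone F, IsLimit c → P c.pt)
    (hquot : ∀ {A B : D} (f : A ⟶ B), IsRegEpi f → P A → P B) :
    GoursatCat (ObjectProperty.FullSubcategory P) := by
  have hclosed (J : Type) [SmallCategory J] [FinCategory J] :
      ObjectProperty.IsClosedUnderLimitsOfShape P J :=
    ⟨fun _ ⟨h⟩ => hlim J _ h.prop_diag_obj _ h.isLimit⟩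
  have : HasFiniteLimits (ObjectProperty.FullSubcategory P) :=
    ⟨fun J _ _ => have := hclosed J; inferInstance⟩
  have : PreservesFiniteLimits (ObjectProperty.ι P) :=
    ⟨fun J _ _ => have := hclosed J; inferInstance⟩
  have := hclosed WalkingCospan
  have := isRegular_fullSubcategory hquot
  exact ⟨_, IsGoursat.of_fullyFaithful (ObjectProperty.ι P)
    fun _ _ f hf => (isRegEpi_ι_map_iff hquot f).2 hf⟩

end Goursat
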